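/- For every integer r ≥ 2 and every nonnegative integer s, one has Σ_{k=0}^{r} (−r)_k (1+k)_s / ((2−2r)_k · s!) = ((2r−1)/(r−1)) · (2r)_s / (r)_s, where the terms with (2−2r)_k = 0 do not occur since (−r)_k/(2−2r)_k is interpreted as the product Π_{j=0}^{k−1} (−r+j)/(2−2r+j). -/

import Mathlib

/-- The Pochhammer symbol (rising factorial) `(a)ₖ = a(a+1)⋯(a+k−1)`. -/
noncomputable def poch (a : ℂ) (k : ℕ) : ℂ := (ascPochhammer ℂ k).eval a

/-!
Since `(1 + k)ₛ / s! = (1 + s)ₖ / k!`, the sum is the terminating hypergeometric series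
`₂F₁(-r, 1 + s; 2 - 2r; 1)`, which Chu–Vandermonde evaluates as `(1 - 2r - s)ᵣ / (2 - 2r)ᵣ`.
Reflecting both factors, `(-a)ᵣ = (-1)ʳ (a - r + 1)ᵣ`, this is `(r + s)ᵣ / (r - 1)ᵣ`, and splitting
`(r)ᵣ₊ₛ` in two ways gives `(r)ₛ (r + s)ᵣ = (r)ᵣ (2r)ₛ`, while `(r - 1)ᵣ (2r - 1) = (r - 1) (r)ᵣ`.
-/

open Finset Polynomial
open scoped Nat

theorem Polynomial.descPochhammer_smeval_eq_eval {R : Type*} [Ring R] (x : R) (n : ℕ) :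
    (descPochhammer ℤ n).smeval x = (descPochhammer R n).eval x := by
  rw [← aeval_eq_smeval, aeval_def, eval₂_eq_eval_map, descPochhammer_map]

theorem Polynomial.descPochhammer_eval_add {R : Type*} [CommRing R] (x y : R) (n : ℕ) :
    (descPochhammer R n).eval (x + y) = ∑ ij ∈ antidiagonal n,
      n.choose ij.1 * ((descPochhammer R ij.1).eval x * (descPochhammer R ij.2).eval y) := by
  simpa only [descPochhammer_smeval_eq_eval] using
    Ring.descPochhammer_smeval_add n (Commute.all x y)

lemma poch_eq_prod_range (a : ℂ) (n : ℕ) : poch a n = ∏ j ∈ range n, (a + j) := by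
  induction n with
  | zero => simp [poch]
  | succ n ih => rw [prod_range_succ, ← ih, poch, poch, ascPochhammer_succ_right]; simp

lemma poch_ne_zero_iff (a : ℂ) (n : ℕ) : poch a n ≠ 0 ↔ ∀ k < n, (k : ℂ) ≠ -a := by
  simp [poch, ascPochhammer_eval_eq_zero_iff]

lemma poch_one (a : ℂ) : poch a 1 = a := by simp [poch]

lemma poch_add (a : ℂ) (m n : ℕ) : poch a (m + n) = poch a m * poch (a + m) n := by
  simp only [poch, ← ascPochhammer_mul, eval_mul, eval_comp, eval_add, eval_X, eval_natCast]

lemma poch_mul_poch_comm (a : ℂ) (m n : ℕ) :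
    poch a m * poch (a + m) n = poch a n * poch (a + n) m := by
  rw [← poch_add, ← poch_add, Nat.add_comm]

lemma poch_neg (a : ℂ) (n : ℕ) : poch (-a) n = (-1) ^ n * poch (a - n + 1) n := by
  rw [poch, ascPochhammer_eval_neg_eq_descPochhammer, descPochhammer_eval_eq_ascPochhammer, poch]

lemma descPochhammer_eval_neg (a : ℂ) (n : ℕ) :
    (descPochhammer ℂ n).eval (-a) = (-1) ^ n * poch a n := by
  rw [poch, ← neg_neg a, ascPochhammer_eval_neg_eq_descPochhammer, neg_neg, ← mul_assoc,
    ← mul_pow, neg_one_mul, neg_neg, one_pow, one_mul]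

lemma poch_neg_natCast (n k : ℕ) : poch (-n) k = (-1) ^ k * (k ! * n.choose k) := by
  rw [poch, ascPochhammer_eval_neg_eq_descPochhammer, descPochhammer_eval_eq_descFactorial,
    Nat.descFactorial_eq_factorial_mul_choose]
  push_cast; rfl

lemma poch_one_add_div_factorial (k s : ℕ) : poch (1 + k) s / s ! = poch (1 + s) k / k ! := by
  have hk := factorial_mul_ascPochhammer ℂ k s
  have hs := factorial_mul_ascPochhammer ℂ s k
  rw [Nat.add_comm s k] at hs
  rw [div_eq_div_iff (by exact_mod_cast s.factorial_ne_zero)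
    (by exact_mod_cast k.factorial_ne_zero), poch, poch, add_comm (1 : ℂ), add_comm (1 : ℂ)]
  linear_combination hk - hs

theorem chu_vandermonde (n : ℕ) (b c : ℂ) (hc : poch c n ≠ 0) :
    ∑ k ∈ range (n + 1), poch (-n) k * poch b k / (poch c k * k !) =
      poch (c - b) n / poch c n := by
  -- Vandermonde for falling factorials at `-b` and `c + n - 1`: the falling factorials of
  -- `-b` are `(-1)ᵏ (b)ₖ`, and those of `c + n - 1` of length `n - k` are `(c + k)ₙ₋ₖ = (c)ₙ / (c)ₖ`.
  have vandermonde := descPochhammer_eval_add (-b) (c + n - 1) n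
  simp only [Nat.sum_antidiagonal_eq_sum_range_succ_mk] at vandermonde
  rw [descPochhammer_eval_eq_ascPochhammer, show -b + (c + n - 1) - n + 1 = c - b by ring]
    at vandermonde
  change poch (c - b) n = _ at vandermonde
  rw [eq_div_iff hc, sum_mul, vandermonde]
  refine sum_congr rfl fun k hk => ?_
  have hkn : k ≤ n := Nat.lt_succ_iff.mp (mem_range.mp hk)
  have hsplit : poch c n = poch c k * poch (c + k) (n - k) := by
    rw [← poch_add, Nat.add_sub_cancel' hkn]
  have hck : poch c k ≠ 0 := left_ne_zero_of_mul (hsplit ▸ hc)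
  have hk! : (k ! : ℂ) ≠ 0 := by exact_mod_cast Nat.factorial_ne_zero k
  have hshift : c + n - 1 - ((n - k : ℕ) : ℂ) + 1 = c + k := by
    push_cast [Nat.cast_sub hkn]; ring
  rw [descPochhammer_eval_neg, descPochhammer_eval_eq_ascPochhammer, hshift, poch_neg_natCast,
    hsplit]
  field_simp
  rfl

lemma sub_one_mul_poch (a : ℂ) (n : ℕ) : (a - 1) * poch a n = poch (a - 1) n * (a - 1 + n) := by
  have h := poch_add (a - 1) n 1
  rw [Nat.add_comm, poch_add, poch_one, poch_one, Nat.cast_one, sub_add_cancel] at h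
  exact h

lemma poch_natCast_ne_zero {a : ℕ} (ha : 0 < a) (n : ℕ) : poch a n ≠ 0 := by
  refine (poch_ne_zero_iff _ n).2 fun k _ h => ?_
  have : ((k + a : ℕ) : ℂ) = 0 := by push_cast; rw [h]; ring
  exact absurd (Nat.cast_eq_zero.mp this) (by omega)

lemma poch_two_sub_two_mul_ne_zero {r : ℕ} (hr : 2 ≤ r) : poch (2 - 2 * r) r ≠ 0 := by
  refine (poch_ne_zero_iff _ r).2 fun k hk h => ?_
  have : ((k + 2 : ℕ) : ℂ) = ((2 * r : ℕ) : ℂ) := by push_cast; linear_combination h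
  have := Nat.cast_injective this
  omega

lemma poch_two_sub_two_mul_sub_div_poch (r s : ℕ) (hr : 2 ≤ r) :
    poch (2 - 2 * r - (1 + s)) r / poch (2 - 2 * r) r =
      (2 * r - 1) / (r - 1) * (poch (2 * r) s / poch r s) := by
  have hden : poch (2 - 2 * r) r = (-1) ^ r * poch (r - 1) r := by
    rw [show (2 - 2 * r : ℂ) = -(2 * r - 2) by ring, poch_neg]; congr 2; ring
  have hnum : poch (2 - 2 * r - (1 + s)) r = (-1) ^ r * poch (r + s) r := by
    rw [show (2 - 2 * r - (1 + s) : ℂ) = -(2 * r + s - 1) by ring, poch_neg]; congr 2; ring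
  have hD : poch (r - 1) r ≠ 0 := right_ne_zero_of_mul (hden ▸ poch_two_sub_two_mul_ne_zero hr)
  have hr1 : (r : ℂ) - 1 ≠ 0 := by
    rw [sub_ne_zero]; exact_mod_cast (by omega : r ≠ 1)
  have hs := poch_natCast_ne_zero (by omega : 0 < r) s
  have hcomm := poch_mul_poch_comm r s r
  have hshift := sub_one_mul_poch r r
  rw [← two_mul] at hcomm
  rw [hnum, hden, mul_div_mul_left _ _ (by simp), div_mul_div_comm,
    div_eq_div_iff hD (mul_ne_zero hr1 hs)]
  linear_combination ((r : ℂ) - 1) * hcomm + poch (2 * r) s * hshift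

theorem finite_sum_ratio_two_r_minus_two (r s : ℕ) (hr : 2 ≤ r) :
    ∑ k ∈ Finset.range (r + 1),
      (∏ j ∈ Finset.range k, ((-(r : ℂ) + j) / (2 - 2 * r + j))) *
        poch (1 + k) s / (s.factorial : ℂ) =
    ((2 * (r : ℂ) - 1) / ((r : ℂ) - 1)) * (poch (2 * r) s / poch r s) := by
  have hterm : ∀ k ∈ range (r + 1),
      (∏ j ∈ range k, ((-(r : ℂ) + j) / (2 - 2 * r + j))) * poch (1 + k) s / s ! =
        poch (-r) k * poch (1 + s) k / (poch (2 - 2 * r) k * k !) := fun k _ => by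
    rw [prod_div_distrib, ← poch_eq_prod_range, ← poch_eq_prod_range, mul_div_assoc,
      poch_one_add_div_factorial, div_mul_div_comm]
  rw [sum_congr rfl hterm, chu_vandermonde r _ _ (poch_two_sub_two_mul_ne_zero hr),
    poch_two_sub_two_mul_sub_div_poch r s hr]
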